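/- Let q ≥ 3 be an odd integer and let A be the adjacency matrix of the unitary Cayley graph of ℤ/4ℤ (the 4-cycle), regarded over ℂ. Then for t ∈ ℝ, exp(i·(q−1)·t·A) = exp(i·(−1)·t·A) if and only if t = kπ/q for some integer k. -/

import Mathlib

open Matrix

/-- The standard basis vector `e_u` in `ℂ^V`. -/
noncomputable def stdVec {V : Type*} (u : V) : V → ℂ :=
  letI := Classical.decEq V
  Pi.single u 1

/-- The transition matrix `H(t) = exp(i t A)` of a graph with adjacency matrix `A`. -/
noncomputable def transMatrix {V : Type*} [Fintype V] (A : Matrix V V ℂ) (t : ℝ) :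
    Matrix V V ℂ :=
  letI := Classical.decEq V
  NormedSpace.exp ((Complex.I * (t : ℂ)) • A)

/-- Quantum fractional revival from `u` to `v` at time `t`. -/
def hasQFR {V : Type*} [Fintype V] (A : Matrix V V ℂ) (u v : V) (t : ℝ) : Prop :=
  u ≠ v ∧ ∃ α β : ℂ, β ≠ 0 ∧
    (transMatrix A t) *ᵥ stdVec u = α • stdVec u + β • stdVec v

/-- The unitary Cayley graph of a commutative ring: distinct `a, b` are adjacent
iff `a - b` is a unit. -/
def unitaryCayleyGraph (R : Type*) [CommRing R] : SimpleGraph R where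
  Adj a b := a ≠ b ∧ IsUnit (a - b)
  symm := ⟨by
    rintro a b ⟨h1, h2⟩
    refine ⟨h1.symm, ?_⟩
    rw [← neg_sub]
    exact h2.neg⟩
  loopless := ⟨fun a h => h.1 rfl⟩

/-- The adjacency matrix (over `ℂ`) of the unitary Cayley graph of `R`. -/
noncomputable def ucMatrix (R : Type*) [CommRing R] : Matrix R R ℂ :=
  letI := Classical.decEq R
  letI := Classical.decRel (unitaryCayleyGraph R).Adj
  (unitaryCayleyGraph R).adjMatrix ℂ

/-- The adjacency matrix (over `ℂ`) of a simple graph. -/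
noncomputable def adjMat {V : Type*} (G : SimpleGraph V) : Matrix V V ℂ :=
  letI := Classical.decEq V
  letI := Classical.decRel G.Adj
  G.adjMatrix ℂ


/-! The unitary Cayley graph of `ℤ/4` is the 4-cycle, whose adjacency matrix `A` is diagonalised
by an explicit eigenbasis `P` with eigenvalues `2, -2, 0, 0`; hence
`exp(isA) = P * diagonal ![exp(2is), exp(-2is), 1, 1] * P⁻¹`, which is `1` iff `s ∈ πℤ`.
Since `t ↦ exp(itA)` is a one-parameter group, `H((q - 1)t) = H(-t)` amounts to `H(qt) = 1`. -/

theorem mul_mul_eq_one_iff_of_mul_eq_one {M : Type*} [Monoid M] [IsDedekindFiniteMonoid M]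
    {p q d : M} (hqp : q * p = 1) : p * d * q = 1 ↔ d = 1 := by
  constructor
  · intro h
    calc d = q * (p * d * q) * p := by
          rw [← mul_assoc, ← mul_assoc, hqp, one_mul, mul_assoc, hqp, mul_one]
      _ = 1 := by rw [h, mul_one, hqp]
  · rintro rfl
    rw [mul_one, mul_eq_one_comm.mp hqp]

theorem exp_mul_I_mul_two_eq_one_iff (s : ℝ) :
    Complex.exp (Complex.I * s * 2) = 1 ↔ ∃ k : ℤ, s = k * Real.pi := by
  rw [Complex.exp_eq_one_iff]
  refine exists_congr fun k => ⟨fun h => ?_, fun h => by rw [h]; push_cast; ring⟩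
  have : ((s : ℝ) : ℂ) = ((k * Real.pi : ℝ) : ℂ) := by
    push_cast
    linear_combination (-Complex.I / 2) * h + (s - k * Real.pi) * Complex.I_sq
  exact_mod_cast this

section transMatrix

variable {V : Type*} [Fintype V] [DecidableEq V]

theorem transMatrix_eq_exp (A : Matrix V V ℂ) (t : ℝ) :
    transMatrix A t = NormedSpace.exp ((Complex.I * t) • A) := by
  rw [transMatrix]
  congr!

theorem transMatrix_zero (A : Matrix V V ℂ) : transMatrix A 0 = 1 := by
  simp [transMatrix_eq_exp]

theorem transMatrix_add (A : Matrix V V ℂ) (s u : ℝ) :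
    transMatrix A (s + u) = transMatrix A s * transMatrix A u := by
  simp only [transMatrix_eq_exp, Complex.ofReal_add, mul_add, add_smul]
  exact Matrix.exp_add_of_commute _ _ (((Commute.refl A).smul_left _).smul_right _)

theorem transMatrix_eq_transMatrix_iff (A : Matrix V V ℂ) (s u : ℝ) :
    transMatrix A s = transMatrix A u ↔ transMatrix A (s - u) = 1 := by
  have hu : IsUnit (transMatrix A u) := .of_mul_eq_one (transMatrix A (-u)) <| by
    rw [← transMatrix_add, add_neg_cancel, transMatrix_zero]
  rw [← hu.mul_eq_right, ← transMatrix_add, sub_add_cancel]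

theorem transMatrix_conj_diagonal {P Q : Matrix V V ℂ} (hQP : Q * P = 1) (d : V → ℂ) (s : ℝ) :
    transMatrix (P * diagonal d * Q) s =
      P * diagonal (fun j => Complex.exp (Complex.I * s * d j)) * Q := by
  let U : (Matrix V V ℂ)ˣ := ⟨P, Q, mul_eq_one_comm.mp hQP, hQP⟩
  rw [transMatrix_eq_exp]
  convert Matrix.exp_units_conj U (diagonal ((Complex.I * s) • d)) using 2
  · rw [diagonal_smul, Matrix.mul_smul, Matrix.smul_mul]
    rfl
  · rw [Matrix.exp_diagonal]
    congr 2
    ext j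
    simp [Complex.exp_eq_exp_ℂ, mul_assoc]
  · rfl

theorem transMatrix_conj_diagonal_eq_one_iff {P Q : Matrix V V ℂ} (hQP : Q * P = 1)
    (d : V → ℂ) (s : ℝ) :
    transMatrix (P * diagonal d * Q) s = 1 ↔ ∀ j, Complex.exp (Complex.I * s * d j) = 1 := by
  rw [transMatrix_conj_diagonal hQP, mul_mul_eq_one_iff_of_mul_eq_one hQP, diagonal_eq_one,
    funext_iff]
  rfl

end transMatrix

theorem ucMatrix_apply {R : Type*} [CommRing R] [Nontrivial R] (a b : R)
    [Decidable (IsUnit (a - b))] : ucMatrix R a b = if IsUnit (a - b) then 1 else 0 := by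
  rw [ucMatrix, SimpleGraph.adjMatrix_apply]
  congr 1
  exact propext ⟨And.right, fun h => ⟨fun hab => by simp [hab] at h, h⟩⟩

namespace CycleFour

def adjacency : Matrix (Fin 4) (Fin 4) ℂ := !![0, 1, 0, 1; 1, 0, 1, 0; 0, 1, 0, 1; 1, 0, 1, 0]

def eigenbasis : Matrix (Fin 4) (Fin 4) ℂ := !![1, 1, 1, 0; 1, -1, 0, 1; 1, 1, -1, 0; 1, -1, 0, -1]

noncomputable def eigenbasisInv : Matrix (Fin 4) (Fin 4) ℂ :=
  !![1/4, 1/4, 1/4, 1/4; 1/4, -1/4, 1/4, -1/4; 1/2, 0, -1/2, 0; 0, 1/2, 0, -1/2]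

theorem eigenbasisInv_mul_eigenbasis : eigenbasisInv * eigenbasis = 1 := by
  ext i j
  fin_cases i <;> fin_cases j <;>
    simp [eigenbasisInv, eigenbasis, Matrix.mul_apply, Fin.sum_univ_four] <;> norm_num

theorem adjacency_eq : adjacency = eigenbasis * diagonal ![2, -2, 0, 0] * eigenbasisInv := by
  ext i j
  fin_cases i <;> fin_cases j <;>
    simp [adjacency, eigenbasisInv, eigenbasis, Matrix.mul_apply, Fin.sum_univ_four,
      vecMul_diagonal] <;> norm_num

theorem transMatrix_adjacency_eq_one_iff (s : ℝ) :
    transMatrix adjacency s = 1 ↔ ∃ k : ℤ, s = k * Real.pi := by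
  rw [adjacency_eq, transMatrix_conj_diagonal_eq_one_iff eigenbasisInv_mul_eigenbasis,
    ← exp_mul_I_mul_two_eq_one_iff]
  refine ⟨fun h => by simpa using h 0, fun h j => ?_⟩
  fin_cases j
  · simpa using h
  · simpa [Complex.exp_neg, mul_neg] using congrArg (·⁻¹) h
  all_goals simp

end CycleFour

-- `ZMod 4` unfolds to `Fin 4`, so the two matrix types agree definitionally.
theorem ucMatrix_zmod_four : ucMatrix (ZMod 4) = CycleFour.adjacency := by
  have : Fact (1 < 4) := ⟨by norm_num⟩
  ext i j
  rw [ucMatrix_apply]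
  change Fin 4 at i j
  fin_cases i <;> fin_cases j <;> simp +decide [CycleFour.adjacency]

theorem transMatrix_ucMatrix_zmod_four_eq_one_iff (s : ℝ) :
    transMatrix (ucMatrix (ZMod 4)) s = 1 ↔ ∃ k : ℤ, s = k * Real.pi := by
  rw [ucMatrix_zmod_four]
  exact CycleFour.transMatrix_adjacency_eq_one_iff s

theorem exp_eq_iff_time_zmod_four_general (q : ℕ) (hq : 3 ≤ q) (t : ℝ) :
    transMatrix (ucMatrix (ZMod 4)) (((q : ℝ) - 1) * t) =
        transMatrix (ucMatrix (ZMod 4)) ((-1 : ℝ) * t) ↔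
      ∃ k : ℤ, t = (k : ℝ) * Real.pi / q := by
  have hq0 : (q : ℝ) ≠ 0 := Nat.cast_ne_zero.mpr (by omega)
  rw [transMatrix_eq_transMatrix_iff, show ((q : ℝ) - 1) * t - -1 * t = q * t by ring,
    transMatrix_ucMatrix_zmod_four_eq_one_iff]
  refine exists_congr fun k => ?_
  rw [eq_div_iff hq0, mul_comm t]

/-- for odd `q ≥ 3` and the adjacency matrix `A` of the unitary Cayley
graph of `ℤ/4`, `exp(i(q-1)tA) = exp(i(-1)tA)` iff `t = kπ/q` for some integer `k`. -/
theorem exp_eq_iff_time_zmod_four (q : ℕ) (hq : 3 ≤ q) (hodd : Odd q) (t : ℝ) :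
    transMatrix (ucMatrix (ZMod 4)) (((q : ℝ) - 1) * t) =
        transMatrix (ucMatrix (ZMod 4)) ((-1 : ℝ) * t) ↔
      ∃ k : ℤ, t = (k : ℝ) * Real.pi / q :=
  exp_eq_iff_time_zmod_four_general q hq t
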